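/- Let U₀ ∈ ℝ^{m×t}, X₀, X₁ ∈ ℝ^{n×t} with D = [U₀ᵀ, X₀ᵀ]ᵀ of full row rank m+n; define Λ = (1/t)DDᵀ, Ū₀ = (1/t)U₀Dᵀ, X̄₀ = (1/t)X₀Dᵀ, X̄₁ = (1/t)X₁Dᵀ, [B̂, Â] = X₁Dᵀ(DDᵀ)⁻¹, the projection Π = I_{m+n} − X̄₀ᵀ(X̄₀X̄₀ᵀ)⁻¹X̄₀, and M = Ū₀ Π Ū₀ᵀ. Fix symmetric positive definite Q, R and a feasible pair ξ = (V, H) with X̄₀V = I_n, X̄₀H = 0, ρ(X̄₁V) < 1, and set θ = (K, L) = (Ū₀V, Ū₀H). Let ξ⁺ = ξ − η Π ∇C_data(ξ) for a step size η > 0, i.e. V⁺ = V − η Π ∇_V C_data(ξ) and H⁺ = H − η Π ∇_H C_data(ξ). Then X̄₀V⁺ = I_n, X̄₀H⁺ = 0, and the corresponding policy θ⁺ = (Ū₀V⁺, Ū₀H⁺) satisfies θ⁺ = θ − η M ∇Ĉ(θ), i.e. Ū₀V⁺ = K − ηM∇_K Ĉ(θ) and Ū₀H⁺ = L − ηM∇_L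 Ĉ(θ). -/

import Mathlib

noncomputable section

open Matrix

attribute [local instance] Matrix.normedAddCommGroup Matrix.normedSpace

/-- Spectral radius of a real square matrix: supremum of the moduli of its complex eigenvalues. -/
def specRad {n : Type*} [Fintype n] [DecidableEq n] (M : Matrix n n ℝ) : ℝ :=
  sSup ((fun μ : ℂ => ‖μ‖) '' spectrum ℂ (M.map (algebraMap ℝ ℂ)))

def Pmat {n m : Type*} [Fintype n] [Fintype m] [DecidableEq n]
    (A : Matrix n n ℝ) (B : Matrix n m ℝ) (Q : Matrix n n ℝ) (R : Matrix m m ℝ)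
    (K : Matrix m n ℝ) : Matrix n n ℝ :=
  ∑' k : ℕ, ((A + B * K)ᵀ) ^ k * (Q + Kᵀ * R * K) * (A + B * K) ^ k

def Ymat {n m : Type*} [Fintype n] [Fintype m] [DecidableEq n]
    (A : Matrix n n ℝ) (B : Matrix n m ℝ) (K : Matrix m n ℝ) : Matrix n n ℝ :=
  (1 - (A + B * K))⁻¹

def Gmat {n m : Type*} [Fintype n] [Fintype m] [DecidableEq n]
    (A : Matrix n n ℝ) (B : Matrix n m ℝ) (Q : Matrix n n ℝ) (R : Matrix m m ℝ)
    (K L : Matrix m n ℝ) : Matrix n n ℝ :=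
  (Ymat A B K)ᵀ * (-Q + Kᵀ * R * L + (A + B * K)ᵀ * Pmat A B Q R K * (B * L))

def costC {n m : Type*} [Fintype n] [Fintype m] [DecidableEq n]
    (A : Matrix n n ℝ) (B : Matrix n m ℝ) (Q : Matrix n n ℝ) (R : Matrix m m ℝ)
    (K L : Matrix m n ℝ) : ℝ :=
  (Q + Lᵀ * R * L + Lᵀ * Bᵀ * Pmat A B Q R K * (B * L) + (Fintype.card n : ℝ) • Pmat A B Q R K
    + (2 : ℝ) • ((Gmat A B Q R K L)ᵀ * (B * L))).trace

def PmatData {n m p : Type*} [Fintype n] [Fintype m] [Fintype p] [DecidableEq n]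
    (Ub : Matrix m p ℝ) (X1b : Matrix n p ℝ) (Q : Matrix n n ℝ) (R : Matrix m m ℝ)
    (V : Matrix p n ℝ) : Matrix n n ℝ :=
  ∑' k : ℕ, ((X1b * V)ᵀ) ^ k * (Q + Vᵀ * Ubᵀ * R * (Ub * V)) * (X1b * V) ^ k

def GmatData {n m p : Type*} [Fintype n] [Fintype m] [Fintype p] [DecidableEq n]
    (Ub : Matrix m p ℝ) (X1b : Matrix n p ℝ) (Q : Matrix n n ℝ) (R : Matrix m m ℝ)
    (V H : Matrix p n ℝ) : Matrix n n ℝ :=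
  ((1 - X1b * V)⁻¹)ᵀ *
    (-Q + Vᵀ * Ubᵀ * R * (Ub * H) + Vᵀ * X1bᵀ * PmatData Ub X1b Q R V * (X1b * H))

def costData {n m p : Type*} [Fintype n] [Fintype m] [Fintype p] [DecidableEq n]
    (Ub : Matrix m p ℝ) (X1b : Matrix n p ℝ) (Q : Matrix n n ℝ) (R : Matrix m m ℝ)
    (V H : Matrix p n ℝ) : ℝ :=
  (Q + Hᵀ * Ubᵀ * R * (Ub * H) + Hᵀ * X1bᵀ * PmatData Ub X1b Q R V * (X1b * H)
    + (Fintype.card n : ℝ) • PmatData Ub X1b Q R V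
    + (2 : ℝ) • ((GmatData Ub X1b Q R V H)ᵀ * (X1b * H))).trace

/-- The continuous linear functional `Δ ↦ ⟨G, Δ⟩` for the Frobenius inner product on pairs. -/
def frobPairing {a b : Type*} [Fintype a] [Fintype b] [DecidableEq a] [DecidableEq b]
    (G : Matrix a b ℝ × Matrix a b ℝ) : (Matrix a b ℝ × Matrix a b ℝ) →L[ℝ] ℝ :=
  LinearMap.toContinuousLinearMap
    { toFun := fun Δ => (G.1ᵀ * Δ.1).trace + (G.2ᵀ * Δ.2).trace
      map_add' := by
        intro x y
        simp [Matrix.mul_add, Matrix.trace_add]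
        ring
      map_smul' := by
        intro c x
        simp [Matrix.mul_smul, Matrix.trace_smul]
        ring }

lemma trace_tmul_self_eq_zero {a b : Type*} [Fintype a] [Fintype b]
    (A : Matrix a b ℝ) (h : (Aᵀ * A).trace = 0) : A = 0 := by
  have hdiag : ∀ j, (Aᵀ * A) j j = ∑ i, A i j * A i j := by
    intro j; rw [Matrix.mul_apply]; exact Finset.sum_congr rfl fun i _ => by
      rw [Matrix.transpose_apply]
  have hnn : ∀ j ∈ Finset.univ, (0:ℝ) ≤ (Aᵀ * A) j j := by
    intro j _; rw [hdiag]; exact Finset.sum_nonneg fun i _ => mul_self_nonneg _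
  rw [Matrix.trace] at h
  have h0 := (Finset.sum_eq_zero_iff_of_nonneg hnn).1 h
  ext i j
  have hj := h0 j (Finset.mem_univ j)
  rw [hdiag] at hj
  have h1 := (Finset.sum_eq_zero_iff_of_nonneg (fun i _ => mul_self_nonneg (A i j))).1 hj i
    (Finset.mem_univ i)
  simpa [Matrix.zero_apply, mul_self_eq_zero] using h1

lemma vecMul_smul_mat {a b : Type*} [Fintype a] (c : ℝ) (M : Matrix a b ℝ) (v : a → ℝ) :
    v ᵥ* (c • M) = c • (v ᵥ* M) := by
  ext j
  simp [Matrix.vecMul, dotProduct, Finset.mul_sum, mul_left_comm]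

lemma gram_vecMul_zero {a b : Type*} [Fintype a] [Fintype b] (A : Matrix a b ℝ) (v : a → ℝ)
    (h : v ᵥ* (A * Aᵀ) = 0) : v ᵥ* A = 0 := by
  have h1 : (v ᵥ* A) ⬝ᵥ (v ᵥ* A) = 0 := by
    calc (v ᵥ* A) ⬝ᵥ (v ᵥ* A) = (v ᵥ* A) ⬝ᵥ (Aᵀ *ᵥ v) := by rw [Matrix.mulVec_transpose]
    _ = ((v ᵥ* A) ᵥ* Aᵀ) ⬝ᵥ v := by rw [Matrix.dotProduct_mulVec]
    _ = (v ᵥ* (A * Aᵀ)) ⬝ᵥ v := by rw [Matrix.vecMul_vecMul]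
    _ = 0 := by rw [h, zero_dotProduct]
  exact dotProduct_self_eq_zero.1 h1

lemma costData_eq_costC {n m p : Type*} [Fintype n] [Fintype m] [Fintype p]
    [DecidableEq n] [DecidableEq m]
    (Ahat : Matrix n n ℝ) (Bhat : Matrix n m ℝ) (Ub : Matrix m p ℝ) (X0b X1b : Matrix n p ℝ)
    (hX1 : X1b = Bhat * Ub + Ahat * X0b)
    (Q : Matrix n n ℝ) (R : Matrix m m ℝ) (V₁ H₁ : Matrix p n ℝ)
    (h1 : X0b * V₁ = 1) (h2 : X0b * H₁ = 0) :
    costData Ub X1b Q R V₁ H₁ = costC Ahat Bhat Q R (Ub * V₁) (Ub * H₁) := by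
  have hV : X1b * V₁ = Ahat + Bhat * (Ub * V₁) := by
    rw [hX1, Matrix.add_mul, Matrix.mul_assoc, Matrix.mul_assoc, h1, Matrix.mul_one, add_comm]
  have hH : X1b * H₁ = Bhat * (Ub * H₁) := by
    rw [hX1, Matrix.add_mul, Matrix.mul_assoc, Matrix.mul_assoc, h2, Matrix.mul_zero, add_zero]
  have hP : PmatData Ub X1b Q R V₁ = Pmat Ahat Bhat Q R (Ub * V₁) := by
    unfold PmatData Pmat
    rw [hV, Matrix.transpose_mul Ub V₁]
  have hG : GmatData Ub X1b Q R V₁ H₁ = Gmat Ahat Bhat Q R (Ub * V₁) (Ub * H₁) := by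
    unfold GmatData Gmat Ymat
    rw [hP, ← Matrix.transpose_mul X1b V₁, hV, hH, Matrix.transpose_mul Ub V₁]
  unfold costData costC
  rw [hP, hG, ← Matrix.transpose_mul X1b H₁, hH, Matrix.transpose_mul Bhat (Ub * H₁),
    Matrix.transpose_mul Ub H₁]

set_option maxHeartbeats 2000000 in
/-- One step of the data-driven projected gradient update on `ξ = (V, H)`
preserves the affine feasibility constraints and corresponds, through `θ = (Ū₀V, Ū₀H)`, to the
model-based preconditioned gradient step `θ⁺ = θ − η M ∇Ĉ(θ)` with `M = Ū₀ Π Ū₀ᵀ`. -/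
theorem stmt9 (m n t : ℕ) (ht : m + n ≤ t)
    (U₀ : Matrix (Fin m) (Fin t) ℝ) (X₀ X₁ : Matrix (Fin n) (Fin t) ℝ)
    (D : Matrix (Fin m ⊕ Fin n) (Fin t) ℝ) (hD : D = Matrix.fromRows U₀ X₀)
    (hrank : D.rank = m + n)
    (Λ : Matrix (Fin m ⊕ Fin n) (Fin m ⊕ Fin n) ℝ) (hΛ : Λ = (1 / (t : ℝ)) • (D * Dᵀ))
    (Ub : Matrix (Fin m) (Fin m ⊕ Fin n) ℝ) (hUb : Ub = (1 / (t : ℝ)) • (U₀ * Dᵀ))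
    (X0b : Matrix (Fin n) (Fin m ⊕ Fin n) ℝ) (hX0b : X0b = (1 / (t : ℝ)) • (X₀ * Dᵀ))
    (X1b : Matrix (Fin n) (Fin m ⊕ Fin n) ℝ) (hX1b : X1b = (1 / (t : ℝ)) • (X₁ * Dᵀ))
    (Θhat : Matrix (Fin n) (Fin m ⊕ Fin n) ℝ) (hΘhat : Θhat = X₁ * Dᵀ * (D * Dᵀ)⁻¹)
    (Bhat : Matrix (Fin n) (Fin m) ℝ) (hBhat : Bhat = Θhat.submatrix id Sum.inl)
    (Ahat : Matrix (Fin n) (Fin n) ℝ) (hAhat : Ahat = Θhat.submatrix id Sum.inr)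
    (Pr : Matrix (Fin m ⊕ Fin n) (Fin m ⊕ Fin n) ℝ)
    (hPr : Pr = 1 - X0bᵀ * (X0b * X0bᵀ)⁻¹ * X0b)
    (M : Matrix (Fin m) (Fin m) ℝ) (hM : M = Ub * Pr * Ubᵀ)
    (Q : Matrix (Fin n) (Fin n) ℝ) (R : Matrix (Fin m) (Fin m) ℝ)
    (hQ : Q.PosDef) (hR : R.PosDef)
    (V H : Matrix (Fin m ⊕ Fin n) (Fin n) ℝ)
    (hfeas1 : X0b * V = 1) (hfeas2 : X0b * H = 0) (hfeas3 : specRad (X1b * V) < 1)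
    (K L : Matrix (Fin m) (Fin n) ℝ) (hK : K = Ub * V) (hL : L = Ub * H)
    (η : ℝ) (hη : 0 < η)
    -- the Frobenius gradient of the data-based cost at ξ = (V, H)
    (GV GH : Matrix (Fin m ⊕ Fin n) (Fin n) ℝ)
    (hGrad : HasFDerivAt
      (fun ξ : Matrix (Fin m ⊕ Fin n) (Fin n) ℝ × Matrix (Fin m ⊕ Fin n) (Fin n) ℝ =>
        costData Ub X1b Q R ξ.1 ξ.2) (frobPairing (GV, GH)) (V, H))
    -- the Frobenius gradient of the model-based (certainty-equivalence) cost at θ = (K, L)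
    (Gk Gl : Matrix (Fin m) (Fin n) ℝ)
    (hGradHat : HasFDerivAt
      (fun θ : Matrix (Fin m) (Fin n) ℝ × Matrix (Fin m) (Fin n) ℝ =>
        costC Ahat Bhat Q R θ.1 θ.2) (frobPairing (Gk, Gl)) (K, L))
    (V' H' : Matrix (Fin m ⊕ Fin n) (Fin n) ℝ)
    (hV' : V' = V - η • (Pr * GV)) (hH' : H' = H - η • (Pr * GH)) :
    X0b * V' = 1 ∧ X0b * H' = 0 ∧
    Ub * V' = K - η • (M * Gk) ∧ Ub * H' = L - η • (M * Gl) := by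
  rcases Nat.eq_zero_or_pos t with ht0 | htpos
  · subst ht0
    refine ⟨?_, ?_, ?_, ?_⟩ <;>
      · ext i j
        exact absurd i.isLt (by omega)
  have htR : (t : ℝ) ≠ 0 := Nat.cast_ne_zero.2 htpos.ne'
  -- rows of D are linearly independent
  have hli : LinearIndependent ℝ (fun i => D i) := by
    rw [linearIndependent_iff_card_eq_finrank_span, Set.finrank]
    have h := Matrix.rank_eq_finrank_span_row D
    rw [hrank] at h
    rw [Fintype.card_sum, Fintype.card_fin, Fintype.card_fin]
    exact h
  have hvD : Function.Injective D.vecMul := Matrix.vecMul_injective_iff.2 hli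
  have hDzero : ∀ v : Fin m ⊕ Fin n → ℝ, v ᵥ* D = 0 → v = 0 := by
    intro v hv
    apply hvD
    show v ᵥ* D = 0 ᵥ* D
    rw [hv, Matrix.zero_vecMul]
  have hDDzero : ∀ v : Fin m ⊕ Fin n → ℝ, v ᵥ* (D * Dᵀ) = 0 → v = 0 :=
    fun v hv => hDzero v (gram_vecMul_zero D v hv)
  have hDDdet : IsUnit (D * Dᵀ).det := by
    apply (Matrix.isUnit_iff_isUnit_det _).1
    apply Matrix.vecMul_injective_iff_isUnit.1
    intro v w hvw
    have hvw' : v ᵥ* (D * Dᵀ) = w ᵥ* (D * Dᵀ) := hvw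
    have h0 : (v - w) ᵥ* (D * Dᵀ) = 0 := by
      rw [Matrix.sub_vecMul, hvw', sub_self]
    exact sub_eq_zero.1 (hDDzero _ h0)
  -- block structures
  have hΛr : Λ = Matrix.fromRows Ub X0b := by
    rw [hΛ, hUb, hX0b, hD, Matrix.fromRows_mul]
    ext (i | i) j <;> simp
  have hΘc : Θhat = Matrix.fromCols Bhat Ahat := by
    ext i (j | j) <;> simp [hBhat, hAhat, Matrix.fromCols]
  have hX1split : X1b = Bhat * Ub + Ahat * X0b := by
    have h1 : Θhat * Λ = X1b := by
      rw [hΘhat, hΛ, hX1b, Matrix.mul_smul, Matrix.mul_assoc (X₁ * Dᵀ),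
        Matrix.nonsing_inv_mul _ hDDdet, Matrix.mul_one]
    rw [← h1, hΘc, hΛr, Matrix.fromCols_mul_fromRows]
  -- X0b has trivial left kernel
  have hX0zero : ∀ v : Fin n → ℝ, v ᵥ* X0b = 0 → v = 0 := by
    intro v hv
    have hu : (Sum.elim 0 v) ᵥ* Λ = 0 := by
      rw [hΛr, Matrix.sumElim_vecMul_fromRows, Matrix.zero_vecMul, hv, add_zero]
    rw [hΛ, vecMul_smul_mat] at hu
    have hu2 : (Sum.elim 0 v) ᵥ* (D * Dᵀ) = 0 := by
      rcases smul_eq_zero.1 hu with h | h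
      · exact absurd h (one_div_ne_zero htR)
      · exact h
    have hz := hDDzero _ hu2
    funext j
    exact congr_fun hz (Sum.inr j)
  have hX0X0det : IsUnit (X0b * X0bᵀ).det := by
    apply (Matrix.isUnit_iff_isUnit_det _).1
    apply Matrix.vecMul_injective_iff_isUnit.1
    intro v w hvw
    have hvw' : v ᵥ* (X0b * X0bᵀ) = w ᵥ* (X0b * X0bᵀ) := hvw
    have h0 : (v - w) ᵥ* (X0b * X0bᵀ) = 0 := by
      rw [Matrix.sub_vecMul, hvw', sub_self]
    exact sub_eq_zero.1 (hX0zero _ (gram_vecMul_zero X0b _ h0))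
  -- projector identities
  have hPr0 : X0b * Pr = 0 := by
    rw [hPr, Matrix.mul_sub, Matrix.mul_one,
      ← Matrix.mul_assoc X0b (X0bᵀ * (X0b * X0bᵀ)⁻¹) X0b,
      ← Matrix.mul_assoc X0b X0bᵀ (X0b * X0bᵀ)⁻¹,
      Matrix.mul_nonsing_inv _ hX0X0det, Matrix.one_mul, sub_self]
  have hPrT : Prᵀ = Pr := by
    rw [hPr]
    rw [Matrix.transpose_sub, Matrix.transpose_one, Matrix.transpose_mul, Matrix.transpose_mul,
      Matrix.transpose_transpose, Matrix.transpose_nonsing_inv, Matrix.transpose_mul,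
      Matrix.transpose_transpose, Matrix.mul_assoc]
  have hSS : (X0bᵀ * (X0b * X0bᵀ)⁻¹ * X0b) * (X0bᵀ * (X0b * X0bᵀ)⁻¹ * X0b)
      = X0bᵀ * (X0b * X0bᵀ)⁻¹ * X0b := by
    rw [Matrix.mul_assoc (X0bᵀ * (X0b * X0bᵀ)⁻¹) X0b (X0bᵀ * (X0b * X0bᵀ)⁻¹ * X0b),
      ← Matrix.mul_assoc X0b (X0bᵀ * (X0b * X0bᵀ)⁻¹) X0b,
      ← Matrix.mul_assoc X0b X0bᵀ (X0b * X0bᵀ)⁻¹,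
      Matrix.mul_nonsing_inv _ hX0X0det, Matrix.one_mul]
  have hPrPr : Pr * Pr = Pr := by
    rw [hPr]
    simp only [Matrix.sub_mul, Matrix.mul_sub, Matrix.one_mul, Matrix.mul_one, hSS]
    abel
  -- key gradient identity
  have hkey : ∀ Δ₁ Δ₂ : Matrix (Fin m ⊕ Fin n) (Fin n) ℝ, X0b * Δ₁ = 0 → X0b * Δ₂ = 0 →
      (GVᵀ * Δ₁).trace + (GHᵀ * Δ₂).trace
        = (Gkᵀ * (Ub * Δ₁)).trace + (Glᵀ * (Ub * Δ₂)).trace := by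
    intro Δ₁ Δ₂ h₁ h₂
    have hl1 : HasDerivAt (fun s : ℝ => V + s • Δ₁) Δ₁ 0 := by
      exact (((hasDerivAt_id (0:ℝ)).smul_const Δ₁).const_add V).congr_deriv (one_smul ℝ Δ₁)
    have hl2 : HasDerivAt (fun s : ℝ => H + s • Δ₂) Δ₂ 0 := by
      exact (((hasDerivAt_id (0:ℝ)).smul_const Δ₂).const_add H).congr_deriv (one_smul ℝ Δ₂)
    have hline : HasDerivAt (fun s : ℝ => (V + s • Δ₁, H + s • Δ₂)) (Δ₁, Δ₂) 0 := hl1.prodMk hl2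
    have hd1 : HasDerivAt (fun s : ℝ => costData Ub X1b Q R (V + s • Δ₁) (H + s • Δ₂))
        (frobPairing (GV, GH) (Δ₁, Δ₂)) 0 := by
      have hg : HasFDerivAt
          (fun ξ : Matrix (Fin m ⊕ Fin n) (Fin n) ℝ × Matrix (Fin m ⊕ Fin n) (Fin n) ℝ =>
            costData Ub X1b Q R ξ.1 ξ.2) (frobPairing (GV, GH))
          ((V + (0:ℝ) • Δ₁, H + (0:ℝ) • Δ₂)) := by
        rw [zero_smul, add_zero, zero_smul, add_zero]; exact hGrad
      have hcomp := hg.comp_hasDerivAt 0 hline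
      exact hcomp
    have hm1 : HasDerivAt (fun s : ℝ => K + s • (Ub * Δ₁)) (Ub * Δ₁) 0 := by
      exact (((hasDerivAt_id (0:ℝ)).smul_const (Ub * Δ₁)).const_add K).congr_deriv (one_smul ℝ (Ub * Δ₁))
    have hm2 : HasDerivAt (fun s : ℝ => L + s • (Ub * Δ₂)) (Ub * Δ₂) 0 := by
      exact (((hasDerivAt_id (0:ℝ)).smul_const (Ub * Δ₂)).const_add L).congr_deriv (one_smul ℝ (Ub * Δ₂))
    have hline2 : HasDerivAt (fun s : ℝ => (K + s • (Ub * Δ₁), L + s • (Ub * Δ₂)))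
        (Ub * Δ₁, Ub * Δ₂) 0 := hm1.prodMk hm2
    have hd2 : HasDerivAt
        (fun s : ℝ => costC Ahat Bhat Q R (K + s • (Ub * Δ₁)) (L + s • (Ub * Δ₂)))
        (frobPairing (Gk, Gl) (Ub * Δ₁, Ub * Δ₂)) 0 := by
      have hg : HasFDerivAt
          (fun θ : Matrix (Fin m) (Fin n) ℝ × Matrix (Fin m) (Fin n) ℝ =>
            costC Ahat Bhat Q R θ.1 θ.2) (frobPairing (Gk, Gl))
          ((K + (0:ℝ) • (Ub * Δ₁), L + (0:ℝ) • (Ub * Δ₂))) := by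
        rw [zero_smul, add_zero, zero_smul, add_zero]; exact hGradHat
      have hcomp := hg.comp_hasDerivAt 0 hline2
      exact hcomp
    have hfun : (fun s : ℝ => costData Ub X1b Q R (V + s • Δ₁) (H + s • Δ₂))
        = (fun s : ℝ => costC Ahat Bhat Q R (K + s • (Ub * Δ₁)) (L + s • (Ub * Δ₂))) := by
      funext s
      have hf1 : X0b * (V + s • Δ₁) = 1 := by
        rw [Matrix.mul_add, Matrix.mul_smul, h₁, smul_zero, hfeas1, add_zero]
      have hf2 : X0b * (H + s • Δ₂) = 0 := by
        rw [Matrix.mul_add, Matrix.mul_smul, h₂, smul_zero, hfeas2, add_zero]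
      have hc := costData_eq_costC Ahat Bhat Ub X0b X1b hX1split Q R _ _ hf1 hf2
      rw [hc, Matrix.mul_add Ub V (s • Δ₁), Matrix.mul_smul, ← hK,
        Matrix.mul_add Ub H (s • Δ₂), Matrix.mul_smul, ← hL]
    have huniq : frobPairing (GV, GH) (Δ₁, Δ₂) = frobPairing (Gk, Gl) (Ub * Δ₁, Ub * Δ₂) :=
      hd1.unique (hfun ▸ hd2)
    simpa [frobPairing, LinearMap.coe_toContinuousLinearMap'] using huniq
  -- deduce Pr * GV = Pr * (Ubᵀ * Gk) and Pr * GH = Pr * (Ubᵀ * Gl)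
  have hmain : ∀ G : Matrix (Fin m ⊕ Fin n) (Fin n) ℝ, ∀ g : Matrix (Fin m) (Fin n) ℝ,
      (∀ Δ : Matrix (Fin m ⊕ Fin n) (Fin n) ℝ, X0b * Δ = 0 →
        (Gᵀ * Δ).trace = (gᵀ * (Ub * Δ)).trace) →
      Pr * G = Pr * (Ubᵀ * g) := by
    intro G g hG
    have hW : Pr * (G - Ubᵀ * g) = 0 := by
      set W := G - Ubᵀ * g with hWdef
      have hfeasd : X0b * (Pr * W) = 0 := by
        rw [← Matrix.mul_assoc, hPr0, Matrix.zero_mul]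
      have hz := hG (Pr * W) hfeasd
      have hz2 : (Wᵀ * (Pr * W)).trace = 0 := by
        rw [hWdef, Matrix.transpose_sub, Matrix.sub_mul, Matrix.trace_sub,
          Matrix.transpose_mul, Matrix.transpose_transpose, Matrix.mul_assoc, hz, sub_self]
      have hform : (Pr * W)ᵀ * (Pr * W) = Wᵀ * (Pr * W) := by
        rw [Matrix.transpose_mul, hPrT, Matrix.mul_assoc,
          ← Matrix.mul_assoc Pr Pr W, hPrPr]
      exact trace_tmul_self_eq_zero _ (by rw [hform, hz2])
    rw [Matrix.mul_sub] at hW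
    exact sub_eq_zero.1 hW
  have hPrGV : Pr * GV = Pr * (Ubᵀ * Gk) := by
    apply hmain
    intro Δ hΔ
    have := hkey Δ 0 hΔ (Matrix.mul_zero X0b)
    simpa [Matrix.mul_zero, Matrix.trace_zero] using this
  have hPrGH : Pr * GH = Pr * (Ubᵀ * Gl) := by
    apply hmain
    intro Δ hΔ
    have := hkey 0 Δ (Matrix.mul_zero X0b) hΔ
    simpa [Matrix.mul_zero, Matrix.trace_zero] using this
  refine ⟨?_, ?_, ?_, ?_⟩
  · rw [hV', Matrix.mul_sub, Matrix.mul_smul, ← Matrix.mul_assoc, hPr0, Matrix.zero_mul,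
      smul_zero, sub_zero, hfeas1]
  · rw [hH', Matrix.mul_sub, Matrix.mul_smul, ← Matrix.mul_assoc, hPr0, Matrix.zero_mul,
      smul_zero, sub_zero, hfeas2]
  · rw [hV', Matrix.mul_sub, Matrix.mul_smul, hPrGV, hK, hM,
      ← Matrix.mul_assoc Ub Pr (Ubᵀ * Gk), ← Matrix.mul_assoc (Ub * Pr) Ubᵀ Gk]
  · rw [hH', Matrix.mul_sub, Matrix.mul_smul, hPrGH, hL, hM,
      ← Matrix.mul_assoc Ub Pr (Ubᵀ * Gl), ← Matrix.mul_assoc (Ub * Pr) Ubᵀ Gl]
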